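/- Theorem 1 (Detectability, sufficiency): Under the simple model with a vertical obstacle of height h_o at horizontal distance D, the obstacle is detected by the Δα-thresholding ground removal with threshold α_th < 45° if either (1) H_r(D) ≤ h_o < H_{r+1}(D) and α_th < atan2(H_r(D), |D − H_L/tan(ξ_{r-1})|), or (2) h_o ≥ H_{r+1}(D). -/
import Mathlib


/-- First-quadrant atan2: `atan2 y x = arctan (y/x)` for `x ≠ 0`, and `π/2` for `x = 0`. -/
noncomputable def atan2 (y x : ℝ) : ℝ := if x = 0 then Real.pi / 2 else Real.arctan (y / x)

/-- Height of a beam with depression angle `ξ` at horizontal distance `D`,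
for a sensor at height `H_L`: `H(D) = H_L − D·tan ξ`. -/
noncomputable def Hbeam (H_L D ξ : ℝ) : ℝ := H_L - D * Real.tan ξ

/-- Horizontal coordinate of the return of the beam with angle `ξ`: on the obstacle front
face at distance `D` if the obstacle (height `h_o`, at distance `D`) blocks it,
otherwise on the ground behind it. -/
noncomputable def hitX (H_L D h_o ξ : ℝ) : ℝ :=
  if Hbeam H_L D ξ ≤ h_o then D else H_L / Real.tan ξ

/-- Vertical coordinate of the return of the beam with angle `ξ`. -/
noncomputable def hitZ (H_L D h_o ξ : ℝ) : ℝ :=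
  if Hbeam H_L D ξ ≤ h_o then Hbeam H_L D ξ else 0

/-- Inclination angle `α_r` of the point of beam `ξ_r`, relative to the ground return of
beam `ξ_{r-1}` at horizontal distance `H_L / tan ξ_{r-1}`. -/
noncomputable def alphaR (H_L D h_o ξ_rm1 ξ_r : ℝ) : ℝ :=
  atan2 (|hitZ H_L D h_o ξ_r - 0|) (|hitX H_L D h_o ξ_r - H_L / Real.tan ξ_rm1|)

/-- Inclination angle `α_{r+1}` between the returns of beams `ξ_r` and `ξ_{r+1}`. -/
noncomputable def alphaRp1 (H_L D h_o ξ_r ξ_rp1 : ℝ) : ℝ :=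
  atan2 (|hitZ H_L D h_o ξ_rp1 - hitZ H_L D h_o ξ_r|)
        (|hitX H_L D h_o ξ_rp1 - hitX H_L D h_o ξ_r|)

/-- The obstacle is detected by `Δα`-thresholding: since `α_{r-1} = 0` (two ground points),
detection means `Δα_r = |α_r| > α_th` or `Δα_{r+1} = |α_{r+1} − α_r| > α_th`. -/
noncomputable def detected (H_L D h_o α_th ξ_rm1 ξ_r ξ_rp1 : ℝ) : Prop :=
  |alphaR H_L D h_o ξ_rm1 ξ_r| > α_th ∨
  |alphaRp1 H_L D h_o ξ_r ξ_rp1 - alphaR H_L D h_o ξ_rm1 ξ_r| > α_th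

/-- Theorem 1, sufficiency: under the simple model, the vertical obstacle of height `h_o`
at distance `D` is detected if either
(1) `H_r(D) ≤ h_o < H_{r+1}(D)` and `α_th < atan2(H_r(D), |D − H_L/tan ξ_{r-1}|)`, or
(2) `h_o ≥ H_{r+1}(D)`. -/
theorem detectability_sufficiency
    (H_L D h_o α_th ξ_rm1 ξ_r ξ_rp1 : ℝ)
    (hHL : 0 < H_L) (hD : 0 < D) (hho : 0 ≤ h_o)
    (hξ1 : 0 < ξ_rp1) (hξ2 : ξ_rp1 < ξ_r) (hξ3 : ξ_r < ξ_rm1) (hξ4 : ξ_rm1 < Real.pi / 2)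
    (hground : H_L / Real.tan ξ_rm1 < D)      -- beam r−1 hits the ground before the obstacle
    (hHr : 0 < Hbeam H_L D ξ_r)               -- r = min{i : H_i(D) > 0}
    (hHrm1 : Hbeam H_L D ξ_rm1 ≤ 0)
    (hαth0 : 0 ≤ α_th) (hαth : α_th < Real.pi / 4)
    (hcond :
      (Hbeam H_L D ξ_r ≤ h_o ∧ h_o < Hbeam H_L D ξ_rp1 ∧
        α_th < atan2 (Hbeam H_L D ξ_r) (|D - H_L / Real.tan ξ_rm1|)) ∨
      (h_o ≥ Hbeam H_L D ξ_rp1)) :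
    detected H_L D h_o α_th ξ_rm1 ξ_r ξ_rp1 := by
  have htanpos : 0 < Real.tan ξ_rm1 :=
    Real.tan_pos_of_pos_of_lt_pi_div_two (by linarith) hξ4
  have hd : 0 < D - H_L / Real.tan ξ_rm1 := by linarith
  have hHrho : Hbeam H_L D ξ_r ≤ h_o := by
    rcases hcond with ⟨h1, _, _⟩ | h2
    · exact h1
    · have htan : Real.tan ξ_rp1 < Real.tan ξ_r :=
        Real.tan_lt_tan_of_nonneg_of_lt_pi_div_two (le_of_lt hξ1) (by linarith) hξ2
      have : Hbeam H_L D ξ_r < Hbeam H_L D ξ_rp1 := by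
        unfold Hbeam; nlinarith
      linarith
  have hxne : |D - H_L / Real.tan ξ_rm1| ≠ 0 := by
    rw [abs_of_pos hd]; exact ne_of_gt hd
  have hαR : alphaR H_L D h_o ξ_rm1 ξ_r
      = Real.arctan (Hbeam H_L D ξ_r / |D - H_L / Real.tan ξ_rm1|) := by
    unfold alphaR hitZ hitX atan2
    rw [if_pos hHrho, if_pos hHrho, if_neg hxne, sub_zero, abs_of_pos hHr]
  have hαRnonneg : 0 ≤ alphaR H_L D h_o ξ_rm1 ξ_r := by
    rw [hαR]
    rw [← Real.arctan_zero]
    exact Real.arctan_strictMono.monotone (div_nonneg (le_of_lt hHr) (abs_nonneg _))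
  rcases hcond with ⟨h1, h2, h3⟩ | h2
  · left
    rw [abs_of_nonneg hαRnonneg, hαR]
    rwa [atan2, if_neg hxne] at h3
  · have hHrp1 : Hbeam H_L D ξ_rp1 ≤ h_o := h2
    have hαRp1 : alphaRp1 H_L D h_o ξ_r ξ_rp1 = Real.pi / 2 := by
      unfold alphaRp1 hitZ hitX atan2
      rw [if_pos hHrp1, if_pos hHrho, sub_self, abs_zero, if_pos rfl]
    have hαRlt : alphaR H_L D h_o ξ_rm1 ξ_r < Real.pi / 2 := by
      rw [hαR]; exact Real.arctan_lt_pi_div_two _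
    rcases lt_or_ge α_th (alphaR H_L D h_o ξ_rm1 ξ_r) with h | h
    · left
      rwa [abs_of_nonneg hαRnonneg]
    · right
      rw [hαRp1, abs_of_nonneg (by linarith)]
      have hpi : 0 < Real.pi := Real.pi_pos
      linarith
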